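/- arXiv:2601.11498 — 3 statements merged into one kernel-verified Lean document; each statement's English description precedes it below -/
import Mathlib

section
/- (Donald's identity.) Let p be a probability vector over a finite index set, let ρ_x (for x in that set) and σ be density matrices on ℂ^d, and let ρ̄ = Σ_x p_x ρ_x. Then Σ_x p_x D(ρ_x‖σ) = Σ_x p_x D(ρ_x‖ρ̄) + D(ρ̄‖σ), where both sides are extended reals (equal to +∞ precisely when some support condition with p_x > 0 fails). -/
open Matrix BigOperators Filter ComplexOrder

attribute [local instance] Classical.propDecidable

noncomputable section

variable {ι κ : Type*} [Fintype ι] [DecidableEq ι] [Fintype κ] [DecidableEq κ]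

/-- A density matrix: Hermitian, positive semidefinite, trace one. -/
def IsDensityMatrix (ρ : Matrix ι ι ℂ) : Prop :=
  ρ.IsHermitian ∧ ρ.PosSemidef ∧ ρ.trace = 1

/-- Matrix logarithm by functional calculus on the support:
`log` on positive eigenvalues, `0` on the kernel (convention `0 · log 0 = 0`). -/
def mlog (ρ : Matrix ι ι ℂ) : Matrix ι ι ℂ :=
  cfc (fun x : ℝ => if x ≤ 0 then 0 else Real.log x) ρ

/-- Base-2 matrix logarithm by functional calculus on the support. -/
def mlog2 (ρ : Matrix ι ι ℂ) : Matrix ι ι ℂ :=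
  cfc (fun x : ℝ => if x ≤ 0 then 0 else Real.logb 2 x) ρ

/-- `supp ρ ⊆ supp σ`, expressed as `ker σ ⊆ ker ρ`. -/
def SuppLE (ρ σ : Matrix ι ι ℂ) : Prop :=
  ∀ v : ι → ℂ, σ.mulVec v = 0 → ρ.mulVec v = 0

/-- Quantum relative entropy (natural logarithm), as an extended real. -/
def qRelEnt (ρ σ : Matrix ι ι ℂ) : EReal :=
  if SuppLE ρ σ then (((ρ * (mlog ρ - mlog σ)).trace.re : ℝ) : EReal) else ⊤

/-- Quantum relative entropy (base-2 logarithm), as an extended real. -/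
def qRelEnt2 (ρ σ : Matrix ι ι ℂ) : EReal :=
  if SuppLE ρ σ then (((ρ * (mlog2 ρ - mlog2 σ)).trace.re : ℝ) : EReal) else ⊤

/-- Von Neumann entropy (natural logarithm). -/
def vnEnt (ρ : Matrix ι ι ℂ) : ℝ := -((ρ * mlog ρ).trace.re)

/-- Von Neumann entropy (base-2 logarithm). -/
def vnEnt2 (ρ : Matrix ι ι ℂ) : ℝ := -((ρ * mlog2 ρ).trace.re)

/-- The ampliation `𝒩 ⊗ id_k` of a map on matrices, acting on block matrices. -/
def ampliate (k : ℕ) (𝒩 : Matrix ι ι ℂ →ₗ[ℂ] Matrix κ κ ℂ)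
    (V : Matrix (ι × Fin k) (ι × Fin k) ℂ) : Matrix (κ × Fin k) (κ × Fin k) ℂ :=
  Matrix.of fun p q => 𝒩 (Matrix.of fun a b => V (a, p.2) (b, q.2)) p.1 q.1

/-- A quantum channel: a linear, trace-preserving, completely positive map. -/
structure IsQChannel (𝒩 : Matrix ι ι ℂ →ₗ[ℂ] Matrix κ κ ℂ) : Prop where
  trace_preserving : ∀ ρ : Matrix ι ι ℂ, (𝒩 ρ).trace = ρ.trace
  completely_positive : ∀ (k : ℕ) (V : Matrix (ι × Fin k) (ι × Fin k) ℂ),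
    V.PosSemidef → (ampliate k 𝒩 V).PosSemidef

/-- The set of values `H(Σ p_x 𝒩(ρ_x)) − Σ p_x H(𝒩(ρ_x))` over finite ensembles
(natural logarithm). -/
def holevoSet (𝒩 : Matrix ι ι ℂ → Matrix κ κ ℂ) : Set ℝ :=
  { c | ∃ (m : ℕ) (p : Fin m → ℝ) (ρ : Fin m → Matrix ι ι ℂ),
      (∀ x, 0 ≤ p x) ∧ (∑ x, p x = 1) ∧ (∀ x, IsDensityMatrix (ρ x)) ∧
      c = vnEnt (∑ x, (p x : ℂ) • 𝒩 (ρ x)) - ∑ x, p x * vnEnt (𝒩 (ρ x)) }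

/-- The Holevo quantity (natural logarithm). -/
def holevo (𝒩 : Matrix ι ι ℂ → Matrix κ κ ℂ) : ℝ := sSup (holevoSet 𝒩)

/-- The set of values `H(Σ p_x 𝒩(ρ_x)) − Σ p_x H(𝒩(ρ_x))` over finite ensembles
(base-2 logarithm). -/
def holevoSet2 (𝒩 : Matrix ι ι ℂ → Matrix κ κ ℂ) : Set ℝ :=
  { c | ∃ (m : ℕ) (p : Fin m → ℝ) (ρ : Fin m → Matrix ι ι ℂ),
      (∀ x, 0 ≤ p x) ∧ (∑ x, p x = 1) ∧ (∀ x, IsDensityMatrix (ρ x)) ∧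
      c = vnEnt2 (∑ x, (p x : ℂ) • 𝒩 (ρ x)) - ∑ x, p x * vnEnt2 (𝒩 (ρ x)) }

/-- The Holevo quantity (base-2 logarithm). -/
def holevo2 (𝒩 : Matrix ι ι ℂ → Matrix κ κ ℂ) : ℝ := sSup (holevoSet2 𝒩)

/-- The `n`-fold tensor power `𝒩^{⊗n}` of a linear map on matrix algebras, acting as `𝒩`
independently on each tensor factor; matrices on the `n`-fold space are indexed by
`Fin n → Fin d`. -/
def tensorPow {dA dB : ℕ} (n : ℕ)
    (𝒩 : Matrix (Fin dA) (Fin dA) ℂ → Matrix (Fin dB) (Fin dB) ℂ)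
    (ρ : Matrix (Fin n → Fin dA) (Fin n → Fin dA) ℂ) :
    Matrix (Fin n → Fin dB) (Fin n → Fin dB) ℂ :=
  Matrix.of fun f' g' => ∑ f : Fin n → Fin dA, ∑ g : Fin n → Fin dA,
    ρ f g * ∏ i, 𝒩 (Matrix.single (f i) (g i) 1) (f' i) (g' i)

/-- The tensor product `ρ_1 ⊗ ⋯ ⊗ ρ_n` of `n` matrices, as a matrix indexed by
`Fin n → Fin d`. -/
def prodMatrix {d n : ℕ} (ρs : Fin n → Matrix (Fin d) (Fin d) ℂ) :
    Matrix (Fin n → Fin d) (Fin n → Fin d) ℂ :=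
  Matrix.of fun f g => ∏ i, ρs i (f i) (g i)

/-- Real matrix power by functional calculus (acting on eigenvalues). -/
def mpow (A : Matrix ι ι ℂ) (r : ℝ) : Matrix ι ι ℂ :=
  cfc (fun x : ℝ => x ^ r) A

/-! The identity is linear algebra once supports are controlled. Splitting
`log ρₓ - log σ = (log ρₓ - log ρ̄) + (log ρ̄ - log σ)` and using that the trace is linear in the
state turns the weighted sum of the second parts into `Tr ρ̄ (log ρ̄ - log σ)`. For the supports,
`⟨v, ρ̄ v⟩ = Σ pₓ ⟨v, ρₓ v⟩` is a sum of nonnegative terms, so `ker ρ̄ ⊆ ker ρₓ` whenever `pₓ > 0`: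
every `D(ρₓ‖ρ̄)` is finite, and `supp ρ̄ ⊆ supp σ` holds iff `supp ρₓ ⊆ supp σ` for all such `x`. -/

theorem EReal.coe_sum {α : Type*} (s : Finset α) (f : α → ℝ) :
    ((∑ x ∈ s, f x : ℝ) : EReal) = ∑ x ∈ s, (f x : EReal) :=
  map_sum (⟨⟨Real.toEReal, EReal.coe_zero⟩, EReal.coe_add⟩ : ℝ →+ EReal) f s

section Support

omit [DecidableEq ι]

variable {α : Type*} [Fintype α] {p : α → ℝ} {ρ : α → Matrix ι ι ℂ}

theorem SuppLE.trans {ρ σ τ : Matrix ι ι ℂ} (hρσ : SuppLE ρ σ) (hστ : SuppLE σ τ) :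
    SuppLE ρ τ :=
  fun v hv => hρσ v (hστ v hv)

theorem suppLE_sum_smul (hp : ∀ x, 0 ≤ p x) (hρ : ∀ x, (ρ x).PosSemidef) {x : α}
    (hx : 0 < p x) : SuppLE (ρ x) (∑ y, (p y : ℂ) • ρ y) := by
  intro v hv
  have hsum : ∑ y, (p y : ℂ) * (star v ⬝ᵥ ρ y *ᵥ v) = 0 := by
    simpa only [sum_mulVec, smul_mulVec, dotProduct_sum, dotProduct_smul, smul_eq_mul,
      dotProduct_zero] using congrArg (star v ⬝ᵥ ·) hv
  have hnonneg : ∀ y ∈ Finset.univ, 0 ≤ (p y : ℂ) * (star v ⬝ᵥ ρ y *ᵥ v) := fun y _ =>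
    mul_nonneg (Complex.zero_le_real.2 (hp y)) ((hρ y).dotProduct_mulVec_nonneg v)
  have hterm := (Finset.sum_eq_zero_iff_of_nonneg hnonneg).1 hsum x (Finset.mem_univ x)
  rw [mul_eq_zero, Complex.ofReal_eq_zero] at hterm
  exact ((hρ x).dotProduct_mulVec_zero_iff v).1 (hterm.resolve_left hx.ne')

theorem sum_smul_suppLE_iff (hp : ∀ x, 0 ≤ p x) (hρ : ∀ x, (ρ x).PosSemidef)
    (σ : Matrix ι ι ℂ) :
    SuppLE (∑ y, (p y : ℂ) • ρ y) σ ↔ ∀ x, 0 < p x → SuppLE (ρ x) σ := by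
  refine ⟨fun h x hx => (suppLE_sum_smul hp hρ hx).trans h, fun h v hv => ?_⟩
  rw [sum_mulVec]
  refine Finset.sum_eq_zero fun y _ => ?_
  rcases (hp y).eq_or_lt with hy | hy
  · simp [← hy]
  · rw [smul_mulVec, h y hy v hv, smul_zero]

theorem sum_re_trace_mul_sub_eq (L : α → Matrix ι ι ℂ) (M S : Matrix ι ι ℂ) :
    ∑ x, p x * (ρ x * (L x - S)).trace.re =
      ∑ x, p x * (ρ x * (L x - M)).trace.re + ((∑ y, (p y : ℂ) • ρ y) * (M - S)).trace.re := by
  simp only [Finset.sum_mul, trace_sum, Complex.re_sum, smul_mul_assoc, trace_smul,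
    smul_eq_mul, Complex.re_ofReal_mul, mul_sub, trace_sub, Complex.sub_re,
    Finset.sum_sub_distrib]
  ring

end Support

section RelativeEntropy

variable {α : Type*} [Fintype α] {p : α → ℝ} {ρ : α → Matrix ι ι ℂ}

theorem qRelEnt_of_suppLE {ρ σ : Matrix ι ι ℂ} (h : SuppLE ρ σ) :
    qRelEnt ρ σ = (((ρ * (mlog ρ - mlog σ)).trace.re : ℝ) : EReal) :=
  if_pos h

theorem qRelEnt_of_not_suppLE {ρ σ : Matrix ι ι ℂ} (h : ¬ SuppLE ρ σ) : qRelEnt ρ σ = ⊤ :=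
  if_neg h

theorem sum_mul_qRelEnt_of_suppLE (hp : ∀ x, 0 ≤ p x) {τ : Matrix ι ι ℂ}
    (h : ∀ x, 0 < p x → SuppLE (ρ x) τ) :
    ∑ x, (p x : EReal) * qRelEnt (ρ x) τ =
      ((∑ x, p x * (ρ x * (mlog (ρ x) - mlog τ)).trace.re : ℝ) : EReal) := by
  rw [EReal.coe_sum]
  refine Finset.sum_congr rfl fun x _ => ?_
  rcases (hp x).eq_or_lt with hx | hx
  · simp [← hx]
  · rw [qRelEnt_of_suppLE (h x hx), EReal.coe_mul]

theorem sum_mul_qRelEnt_eq_top (hp : ∀ x, 0 ≤ p x) {τ : Matrix ι ι ℂ}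
    (h : ∃ x, 0 < p x ∧ ¬ SuppLE (ρ x) τ) :
    ∑ x, (p x : EReal) * qRelEnt (ρ x) τ = ⊤ := by
  obtain ⟨x, hx, hxτ⟩ := h
  have hne_bot : ∀ y, (p y : EReal) * qRelEnt (ρ y) τ ≠ ⊥ := by
    intro y
    by_cases hyτ : SuppLE (ρ y) τ
    · rw [qRelEnt_of_suppLE hyτ, ← EReal.coe_mul]
      exact EReal.coe_ne_bot _
    · rcases (hp y).eq_or_lt with hy | hy
      · simp [← hy]
      · simp [qRelEnt_of_not_suppLE hyτ, EReal.coe_mul_top_of_pos hy]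
  have hrest : ∑ y ∈ Finset.univ.erase x, (p y : EReal) * qRelEnt (ρ y) τ ≠ ⊥ :=
    Finset.sum_induction _ (· ≠ ⊥) (fun _ _ ha hb => EReal.add_ne_bot_iff.2 ⟨ha, hb⟩)
      EReal.zero_ne_bot fun y _ => hne_bot y
  rw [← Finset.add_sum_erase _ _ (Finset.mem_univ x), qRelEnt_of_not_suppLE hxτ,
    EReal.coe_mul_top_of_pos hx, EReal.top_add_of_ne_bot hrest]

end RelativeEntropy

theorem donald_identity_general {d k : ℕ} (p : Fin k → ℝ) (hp : ∀ x, 0 ≤ p x)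
    (ρ : Fin k → Matrix (Fin d) (Fin d) ℂ) (hρ : ∀ x, IsDensityMatrix (ρ x))
    (σ : Matrix (Fin d) (Fin d) ℂ) :
    (∑ x, ((p x : ℝ) : EReal) * qRelEnt (ρ x) σ =
      ∑ x, ((p x : ℝ) : EReal) * qRelEnt (ρ x) (∑ y, ((p y : ℝ) : ℂ) • ρ y)
        + qRelEnt (∑ y, ((p y : ℝ) : ℂ) • ρ y) σ)
    ∧ ((∑ x, ((p x : ℝ) : EReal) * qRelEnt (ρ x) σ = ⊤) ↔
        ∃ x, 0 < p x ∧ ¬ SuppLE (ρ x) σ) := by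
  have hpsd : ∀ x, (ρ x).PosSemidef := fun x => (hρ x).2.1
  have hmix := sum_mul_qRelEnt_of_suppLE hp fun x hx => suppLE_sum_smul hp hpsd hx
  by_cases hbad : ∃ x, 0 < p x ∧ ¬ SuppLE (ρ x) σ
  · have hmixσ : ¬ SuppLE (∑ y, (p y : ℂ) • ρ y) σ := fun h => by
      obtain ⟨x, hx, hxσ⟩ := hbad
      exact hxσ ((suppLE_sum_smul hp hpsd hx).trans h)
    rw [sum_mul_qRelEnt_eq_top hp hbad, hmix, qRelEnt_of_not_suppLE hmixσ, EReal.coe_add_top]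
    exact ⟨rfl, iff_of_true rfl hbad⟩
  · have hsupp : ∀ x, 0 < p x → SuppLE (ρ x) σ := by
      push Not at hbad
      exact hbad
    have hmixσ := (sum_smul_suppLE_iff hp hpsd σ).2 hsupp
    rw [sum_mul_qRelEnt_of_suppLE hp hsupp, hmix, qRelEnt_of_suppLE hmixσ, ← EReal.coe_add,
      ← sum_re_trace_mul_sub_eq]
    exact ⟨rfl, iff_of_false (EReal.coe_ne_top _) hbad⟩

/-- Donald's identity: `Σ_x p_x D(ρ_x‖σ) = Σ_x p_x D(ρ_x‖ρ̄) + D(ρ̄‖σ)` in the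
extended reals, where `ρ̄ = Σ_x p_x ρ_x`; either side is `+∞` precisely when some support
condition with `p_x > 0` fails. -/
theorem donald_identity {d k : ℕ} (p : Fin k → ℝ) (hp : ∀ x, 0 ≤ p x) (hp1 : ∑ x, p x = 1)
    (ρ : Fin k → Matrix (Fin d) (Fin d) ℂ) (hρ : ∀ x, IsDensityMatrix (ρ x))
    (σ : Matrix (Fin d) (Fin d) ℂ) (hσ : IsDensityMatrix σ) :
    (∑ x, ((p x : ℝ) : EReal) * qRelEnt (ρ x) σ =
      ∑ x, ((p x : ℝ) : EReal) * qRelEnt (ρ x) (∑ y, ((p y : ℝ) : ℂ) • ρ y)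
        + qRelEnt (∑ y, ((p y : ℝ) : ℂ) • ρ y) σ)
    ∧ ((∑ x, ((p x : ℝ) : EReal) * qRelEnt (ρ x) σ = ⊤) ↔
        ∃ x, 0 < p x ∧ ¬ SuppLE (ρ x) σ) :=
  donald_identity_general p hp ρ hρ σ

end
end

section
/- Let 𝒩 be a quantum channel from d_A×d_A to d_B×d_B complex matrices, and let {(p̄_x, ρ̄_x)} be a finite ensemble achieving the Holevo quantity χ(𝒩), assumed finite, and set ω = Σ_x p̄_x 𝒩(ρ̄_x). Then for every index x with p̄_x > 0 one has D(𝒩(ρ̄_x)‖ω) = χ(𝒩). -/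
open Matrix BigOperators Filter ComplexOrder

attribute [local instance] Classical.propDecidable

noncomputable section

variable {ι κ : Type*} [Fintype ι] [DecidableEq ι] [Fintype κ] [DecidableEq κ]

/-!
Write `τ_y = 𝒩(ρ̄_y)`, and for weights `q` let `ω_q = Σ_y q_y τ_y`. The Holevo expression of
`(q, τ)` is `Σ_y q_y D(τ_y‖ω_q)`, and for every state `σ` one has the identity
`Σ_y q_y D(τ_y‖σ) = Σ_y q_y D(τ_y‖ω_q) + D(ω_q‖σ)`, whose last term is nonnegative by Klein's
inequality. Moving the optimal weights `p̄` a fraction `ε` towards the point mass at `x` replaces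
`ω` by `ω_ε = (1 - ε) ω + ε τ_x`, so optimality gives `(1 - ε) χ + ε D(τ_x‖ω_ε) ≤ χ`, that is
`D(τ_x‖ω_ε) ≤ χ`. Because `supp τ_x ⊆ supp ω`, the nonzero eigenvalues of `ω_ε` stay in a fixed
interval `[δ/2, 1]` for small `ε`, on which the truncated logarithm is continuous; continuity of
the functional calculus then gives `log ω_ε → log ω`, hence `D(τ_x‖ω) ≤ χ` whenever `p̄_x > 0`.
These relative entropies average to `χ` with weights `p̄`, so each of them equals `χ`.
-/

open scoped InnerProductSpace Topology

namespace Matrix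

variable {𝕜 n : Type*} [RCLike 𝕜] [Fintype n] [DecidableEq n]

theorem trace_eq_sum_star_dotProduct_mulVec {ι : Type*} [Fintype ι] (M : Matrix n n 𝕜)
    (b : OrthonormalBasis ι 𝕜 (EuclideanSpace 𝕜 n)) :
    M.trace = ∑ i, star ⇑(b i) ⬝ᵥ (M *ᵥ ⇑(b i)) := by
  have h : M.trace = LinearMap.trace 𝕜 _ (toLpLin 2 2 M) := by
    rw [toLpLin_eq_toLin, LinearMap.trace_eq_matrix_trace _ (PiLp.basisFun 2 𝕜 n),
      LinearMap.toMatrix_toLin]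
  rw [h, LinearMap.trace_eq_sum_inner _ b]
  simp [EuclideanSpace.inner_eq_star_dotProduct, dotProduct_comm]

namespace IsHermitian

variable {A : Matrix n n 𝕜} (hA : A.IsHermitian)
include hA

theorem sum_eigenvalues_eq_re_trace : ∑ i, hA.eigenvalues i = RCLike.re A.trace := by
  simp [hA.trace_eq_sum_eigenvalues]

theorem cfc_mulVec_eigenvectorBasis (f : ℝ → ℝ) (j : n) :
    hA.cfc f *ᵥ ⇑(hA.eigenvectorBasis j) = f (hA.eigenvalues j) • ⇑(hA.eigenvectorBasis j) := by
  rw [IsHermitian.cfc, Unitary.conjStarAlgAut_apply, ← mulVec_mulVec, ← mulVec_mulVec,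
    star_eigenvectorUnitary_mulVec, diagonal_mulVec_single, ← smul_eq_mul, Pi.single_smul',
    mulVec_smul, eigenvectorUnitary_mulVec, RCLike.real_smul_eq_coe_smul (K := 𝕜)]
  rfl

theorem re_trace_mul_cfc (M : Matrix n n 𝕜) (f : ℝ → ℝ) :
    RCLike.re (M * hA.cfc f).trace = ∑ j, f (hA.eigenvalues j) *
      RCLike.re (star ⇑(hA.eigenvectorBasis j) ⬝ᵥ (M *ᵥ ⇑(hA.eigenvectorBasis j))) := by
  rw [trace_eq_sum_star_dotProduct_mulVec _ hA.eigenvectorBasis, map_sum]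
  refine Finset.sum_congr rfl fun j _ => ?_
  rw [← mulVec_mulVec, cfc_mulVec_eigenvectorBasis, mulVec_smul, dotProduct_smul,
    RCLike.smul_re]

theorem toEuclideanLin_eigenvectorBasis (j : n) :
    toEuclideanLin A (hA.eigenvectorBasis j) = hA.eigenvalues j • hA.eigenvectorBasis j := by
  ext1
  simp [mulVec_eigenvectorBasis]

theorem re_star_dotProduct_mulVec_eq_sum (x : EuclideanSpace 𝕜 n) :
    RCLike.re (star ⇑x ⬝ᵥ (A *ᵥ ⇑x)) =
      ∑ i, hA.eigenvalues i * ‖⟪hA.eigenvectorBasis i, x⟫_𝕜‖ ^ 2 := by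
  have h : star ⇑x ⬝ᵥ (A *ᵥ ⇑x) = ⟪x, toEuclideanLin A x⟫_𝕜 := by
    simp [EuclideanSpace.inner_eq_star_dotProduct, dotProduct_comm]
  rw [h, ← hA.eigenvectorBasis.sum_inner_mul_inner, map_sum]
  refine Finset.sum_congr rfl fun i _ => ?_
  rw [← isSymmetric_toEuclideanLin_iff.mpr hA, toEuclideanLin_eigenvectorBasis,
    RCLike.real_smul_eq_coe_smul (K := 𝕜), inner_smul_left, ← inner_conj_symm x,
    RCLike.conj_ofReal, mul_left_comm, RCLike.conj_mul, ← RCLike.ofReal_pow,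
    ← RCLike.ofReal_mul, RCLike.ofReal_re]

end IsHermitian

theorem PosSemidef.eigenvalues_le_re_trace {A : Matrix n n 𝕜} (hA : A.PosSemidef) (j : n) :
    hA.1.eigenvalues j ≤ RCLike.re A.trace := by
  rw [← hA.1.sum_eigenvalues_eq_re_trace]
  exact Finset.single_le_sum (fun i _ => hA.eigenvalues_nonneg i) (Finset.mem_univ j)

end Matrix

theorem sub_le_mul_log_sub_log {a b : ℝ} (ha : 0 ≤ a) (hb : 0 ≤ b) (hab : b = 0 → a = 0) :
    a - b ≤ a * (Real.log a - Real.log b) := by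
  rcases ha.eq_or_lt with rfl | ha
  · simpa using hb
  have hb : 0 < b := hb.lt_of_ne fun h => ha.ne' (hab h.symm)
  have h := Real.log_le_sub_one_of_pos (div_pos hb ha)
  rw [Real.log_div hb.ne' ha.ne', le_sub_iff_add_le, le_div_iff₀ ha] at h
  linear_combination h

open Finset in
theorem sum_mul_log_le_of_doublyStochastic {ι κ : Type*} [Fintype ι] [Fintype κ]
    {a : ι → ℝ} {b : κ → ℝ} {c : ι → κ → ℝ} (ha : ∀ i, 0 ≤ a i) (hb : ∀ j, 0 ≤ b j)
    (hc : ∀ i j, 0 ≤ c i j) (hrow : ∀ i, ∑ j, c i j = 1) (hcol : ∀ j, ∑ i, c i j = 1)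
    (hsum : ∑ i, a i = ∑ j, b j) (hsupp : ∀ i j, b j = 0 → a i * c i j = 0) :
    ∑ j, Real.log (b j) * ∑ i, a i * c i j ≤ ∑ i, Real.log (a i) * a i := by
  have hterm : ∀ i j, c i j * (a i * Real.log (b j)) ≤
      c i j * (a i * Real.log (a i) - a i + b j) := by
    intro i j
    rcases (hc i j).eq_or_lt with h | h
    · simp [← h]
    refine mul_le_mul_of_nonneg_left ?_ h.le
    have := sub_le_mul_log_sub_log (ha i) (hb j)
      fun hbj => (mul_eq_zero.1 (hsupp i j hbj)).resolve_right h.ne'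
    linarith
  calc ∑ j, Real.log (b j) * ∑ i, a i * c i j = ∑ i, ∑ j, c i j * (a i * Real.log (b j)) := by
        rw [sum_comm]; simp only [mul_sum]; congr! 2; ring
    _ ≤ ∑ i, ∑ j, c i j * (a i * Real.log (a i) - a i + b j) :=
        sum_le_sum fun i _ => sum_le_sum fun j _ => hterm i j
    _ = ∑ i, Real.log (a i) * a i := by
        simp only [mul_add, mul_sub, sum_add_distrib, sum_sub_distrib, ← sum_mul, hrow, one_mul]
        rw [sum_comm (f := fun i j => c i j * b j)]
        simp only [← sum_mul, hcol, one_mul, hsum, sub_add_cancel, mul_comm (a _)]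

theorem exists_pos_le_of_pos {α : Type*} [Finite α] (a : α → ℝ) :
    ∃ δ > 0, ∀ i, 0 < a i → δ ≤ a i := by
  have h : ∀ᶠ δ in 𝓝[>] (0 : ℝ), ∀ i, 0 < a i → δ ≤ a i :=
    Filter.eventually_all.2 fun i => by
      by_cases hi : 0 < a i
      · filter_upwards [Ioo_mem_nhdsGT hi] with δ hδ using fun _ => hδ.2.le
      · exact Filter.Eventually.of_forall fun _ h => absurd h hi
  obtain ⟨δ, hδ, hδ0⟩ := (h.and self_mem_nhdsWithin).exists
  exact ⟨δ, hδ0, hδ⟩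

theorem eq_of_sum_mul_eq_of_le {α : Type*} [Fintype α] {p f : α → ℝ} {c : ℝ}
    (hp : p ∈ stdSimplex ℝ α) (hle : ∀ y, 0 < p y → f y ≤ c) (hsum : ∑ y, p y * f y = c)
    {x : α} (hx : 0 < p x) : f x = c := by
  have hterm : ∀ y ∈ Finset.univ, 0 ≤ p y * (c - f y) := fun y _ => by
    rcases (hp.1 y).eq_or_lt with h | h
    · simp [← h]
    · exact mul_nonneg h.le (sub_nonneg.2 (hle y h))
  have hzero : ∑ y, p y * (c - f y) = 0 := by
    simp [mul_sub, Finset.sum_sub_distrib, ← Finset.sum_mul, hp.2, hsum]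
  have := (Finset.sum_eq_zero_iff_of_nonneg hterm).1 hzero x (Finset.mem_univ x)
  linarith [(mul_eq_zero.1 this).resolve_left hx.ne']

section Kernels

variable {n : Type*} [Fintype n]

theorem suppLE_of_posSemidef_sub_smul {A B : Matrix n n ℂ} (hA : A.PosSemidef) {c : ℝ}
    (hc : 0 < c) (h : (B - (c : ℂ) • A).PosSemidef) : SuppLE A B := by
  intro v hv
  have hsum : star v ⬝ᵥ ((B - (c : ℂ) • A) *ᵥ v) + (c : ℂ) * (star v ⬝ᵥ (A *ᵥ v)) = 0 := by
    simp [sub_mulVec, hv, smul_mulVec]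
  have hAv := ((add_eq_zero_iff_of_nonneg (h.dotProduct_mulVec_nonneg v)
    (mul_nonneg (Complex.zero_le_real.2 hc.le) (hA.dotProduct_mulVec_nonneg v))).1 hsum).2
  exact (hA.dotProduct_mulVec_zero_iff v).1
    ((mul_eq_zero.1 hAv).resolve_left (Complex.ofReal_ne_zero.2 hc.ne'))

theorem suppLE_sum_smul_s6 {α : Type*} [Fintype α] {q : α → ℝ} {τ : α → Matrix n n ℂ}
    (hq : ∀ y, 0 ≤ q y) (hτ : ∀ y, (τ y).PosSemidef) {z : α} (hz : 0 < q z) :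
    SuppLE (τ z) (∑ y, (q y : ℂ) • τ y) := by
  classical
  refine suppLE_of_posSemidef_sub_smul (hτ z) hz ?_
  rw [← Finset.add_sum_erase _ _ (Finset.mem_univ z), add_sub_cancel_left]
  exact posSemidef_sum _ fun y _ => (hτ y).smul (Complex.zero_le_real.2 (hq y))

theorem IsDensityMatrix.sum_smul {α : Type*} [Fintype α] {q : α → ℝ} {τ : α → Matrix n n ℂ}
    (hq : q ∈ stdSimplex ℝ α) (hτ : ∀ y, IsDensityMatrix (τ y)) :
    IsDensityMatrix (∑ y, (q y : ℂ) • τ y) := by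
  have hpsd := posSemidef_sum Finset.univ fun y _ =>
    (hτ y).2.1.smul (Complex.zero_le_real.2 (hq.1 y))
  refine ⟨hpsd.1, hpsd, ?_⟩
  simp [trace_sum, (hτ _).2.2]
  exact_mod_cast hq.2

end Kernels

section Mixture

def mixture {n : Type*} (ε : ℝ) (ω τ : Matrix n n ℂ) : Matrix n n ℂ :=
  ((1 - ε : ℝ) : ℂ) • ω + (ε : ℂ) • τ

variable {n : Type*} {ω τ : Matrix n n ℂ}

theorem mixture_zero (ω τ : Matrix n n ℂ) : mixture 0 ω τ = ω := by
  simp [mixture]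

theorem continuous_mixture (ω τ : Matrix n n ℂ) : Continuous fun ε : ℝ => mixture ε ω τ := by
  unfold mixture
  fun_prop

theorem Matrix.PosSemidef.mixture (hω : ω.PosSemidef) (hτ : τ.PosSemidef) {ε : ℝ}
    (hε0 : 0 ≤ ε) (hε1 : ε ≤ 1) : (mixture ε ω τ).PosSemidef :=
  (hω.smul (Complex.zero_le_real.2 (by linarith))).add (hτ.smul (Complex.zero_le_real.2 hε0))

theorem mixture_sub_smul (ε : ℝ) (ω τ : Matrix n n ℂ) :
    mixture ε ω τ - ((1 - ε : ℝ) : ℂ) • ω = (ε : ℂ) • τ := by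
  simp [mixture]

variable [Fintype n]

theorem trace_mixture (ε : ℝ) (ω τ : Matrix n n ℂ) :
    (mixture ε ω τ).trace = (1 - ε : ℝ) * ω.trace + ε * τ.trace := by
  simp [mixture]

theorem SuppLE.mixture (h : SuppLE τ ω) (ε : ℝ) : SuppLE (mixture ε ω τ) ω :=
  fun v hv => by simp [_root_.mixture, add_mulVec, smul_mulVec, hv, h v hv]

variable [DecidableEq n]

-- An eigenvector of `B` with nonzero eigenvalue is orthogonal to `ker ω ⊆ ker B`, so it only
-- sees the eigenvalues of `ω` that are at least `δ`.
theorem eigenvalues_ge_of_suppLE {B : Matrix n n ℂ} (hω : ω.PosSemidef) {δ : ℝ}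
    (hδ : ∀ k, 0 < hω.1.eigenvalues k → δ ≤ hω.1.eigenvalues k) (hB : B.IsHermitian)
    (hker : SuppLE B ω) {t : ℝ} (ht : 0 ≤ t) (hle : (B - (t : ℂ) • ω).PosSemidef) (j : n)
    (hj : hB.eigenvalues j ≠ 0) : t * δ ≤ hB.eigenvalues j := by
  have horth : ∀ k, hω.1.eigenvalues k = 0 →
      ⟪hω.1.eigenvectorBasis k, hB.eigenvectorBasis j⟫_ℂ = 0 := by
    intro k hk
    have hωe : ω *ᵥ ⇑(hω.1.eigenvectorBasis k) = 0 := by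
      simp [hω.1.mulVec_eigenvectorBasis, hk]
    have hBe : toEuclideanLin B (hω.1.eigenvectorBasis k) = 0 := by
      ext1 i
      simp [hker _ hωe]
    have h := isSymmetric_toEuclideanLin_iff.mpr hB (hω.1.eigenvectorBasis k)
      (hB.eigenvectorBasis j)
    rw [hBe, inner_zero_left, hB.toEuclideanLin_eigenvectorBasis, inner_smul_right_eq_smul] at h
    exact (smul_eq_zero.1 h.symm).resolve_left hj
  have hnorm : ∑ k, ‖⟪hω.1.eigenvectorBasis k, hB.eigenvectorBasis j⟫_ℂ‖ ^ 2 = 1 := by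
    simp [hω.1.eigenvectorBasis.sum_sq_norm_inner_right, hB.eigenvectorBasis.orthonormal.1 j]
  have hBω : t * RCLike.re (star ⇑(hB.eigenvectorBasis j) ⬝ᵥ (ω *ᵥ ⇑(hB.eigenvectorBasis j))) ≤
      RCLike.re (star ⇑(hB.eigenvectorBasis j) ⬝ᵥ (B *ᵥ ⇑(hB.eigenvectorBasis j))) := by
    have := hle.re_dotProduct_nonneg ⇑(hB.eigenvectorBasis j)
    rw [sub_mulVec, smul_mulVec, dotProduct_sub, dotProduct_smul, smul_eq_mul, map_sub,
      RCLike.re_to_complex, RCLike.re_to_complex, Complex.re_ofReal_mul] at this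
    rw [RCLike.re_to_complex, RCLike.re_to_complex]
    linarith
  calc t * δ = t * ∑ k, δ * ‖⟪hω.1.eigenvectorBasis k, hB.eigenvectorBasis j⟫_ℂ‖ ^ 2 := by
        rw [← Finset.mul_sum, hnorm, mul_one]
    _ ≤ t * ∑ k, hω.1.eigenvalues k * ‖⟪hω.1.eigenvectorBasis k, hB.eigenvectorBasis j⟫_ℂ‖ ^ 2 := by
      refine mul_le_mul_of_nonneg_left (Finset.sum_le_sum fun k _ => ?_) ht
      rcases (hω.eigenvalues_nonneg k).eq_or_lt with h | h
      · simp [horth k h.symm]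
      · exact mul_le_mul_of_nonneg_right (hδ k h) (by positivity)
    _ ≤ hB.eigenvalues j := by
      rw [← hω.1.re_star_dotProduct_mulVec_eq_sum, hB.eigenvalues_eq j]
      exact hBω

theorem spectrum_mixture_subset (hω : IsDensityMatrix ω) (hτ : IsDensityMatrix τ)
    (hsupp : SuppLE τ ω) {δ : ℝ}
    (hδ : ∀ k, 0 < hω.2.1.1.eigenvalues k → δ ≤ hω.2.1.1.eigenvalues k) {ε : ℝ} (hε0 : 0 ≤ ε)
    (hε1 : ε ≤ 1) : spectrum ℝ (mixture ε ω τ) ⊆ insert 0 (Set.Icc ((1 - ε) * δ) 1) := by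
  have hA := hω.2.1.mixture hτ.2.1 hε0 hε1
  rw [hA.1.spectrum_real_eq_range_eigenvalues]
  rintro _ ⟨j, rfl⟩
  by_cases hj : hA.1.eigenvalues j = 0
  · exact Or.inl hj
  refine Or.inr ⟨eigenvalues_ge_of_suppLE hω.2.1 hδ hA.1 (hsupp.mixture ε) (by linarith) ?_ j hj,
    (hA.eigenvalues_le_re_trace j).trans (by simp [trace_mixture, hω.2.2, hτ.2.2])⟩
  rw [mixture_sub_smul]
  exact hτ.2.1.smul (Complex.zero_le_real.2 hε0)

end Mixture

section RelativeEntropy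

variable {n : Type*} [Fintype n] [DecidableEq n]

theorem mlog_eq_cfc_log {A : Matrix n n ℂ} (hA : A.PosSemidef) : mlog A = hA.1.cfc Real.log := by
  rw [← hA.1.cfc_eq, mlog]
  refine cfc_congr fun x hx => ?_
  rw [hA.1.spectrum_real_eq_range_eigenvalues] at hx
  obtain ⟨i, rfl⟩ := hx
  rcases (hA.eigenvalues_nonneg i).eq_or_lt with h | h
  · simp [← h]
  · simp [h.not_ge]

-- Klein's inequality. In eigenbases `u` of `ρ` and `v` of `σ`, the weights `‖⟪u i, v j⟫‖ ^ 2`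
-- form a doubly stochastic matrix (Parseval in each basis).
theorem re_trace_mul_mlog_le {ρ σ : Matrix n n ℂ} (hρ : ρ.PosSemidef) (hσ : σ.PosSemidef)
    (htr : ρ.trace = σ.trace) (hsupp : SuppLE ρ σ) :
    ((ρ * mlog σ).trace).re ≤ ((ρ * mlog ρ).trace).re := by
  have hcross : ∀ j, RCLike.re (star ⇑(hσ.1.eigenvectorBasis j) ⬝ᵥ
      (ρ *ᵥ ⇑(hσ.1.eigenvectorBasis j))) = ∑ i, hρ.1.eigenvalues i *
        ‖⟪hρ.1.eigenvectorBasis i, hσ.1.eigenvectorBasis j⟫_ℂ‖ ^ 2 :=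
    fun j => hρ.1.re_star_dotProduct_mulVec_eq_sum (hσ.1.eigenvectorBasis j)
  have hkernel : ∀ i j, hσ.1.eigenvalues j = 0 → hρ.1.eigenvalues i *
      ‖⟪hρ.1.eigenvectorBasis i, hσ.1.eigenvectorBasis j⟫_ℂ‖ ^ 2 = 0 := by
    intro i j hj
    have hρv : ρ *ᵥ ⇑(hσ.1.eigenvectorBasis j) = 0 :=
      hsupp _ (by simp [hσ.1.mulVec_eigenvectorBasis, hj])
    have := hcross j
    rw [hρv, dotProduct_zero, map_zero, eq_comm,
      Finset.sum_eq_zero_iff_of_nonneg fun i _ =>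
        mul_nonneg (hρ.eigenvalues_nonneg i) (by positivity)] at this
    exact this i (Finset.mem_univ i)
  have hdiag : ∀ i, RCLike.re (star ⇑(hρ.1.eigenvectorBasis i) ⬝ᵥ
      (ρ *ᵥ ⇑(hρ.1.eigenvectorBasis i))) = hρ.1.eigenvalues i :=
    fun i => (hρ.1.eigenvalues_eq i).symm
  have hnorm : ∀ (b : OrthonormalBasis n ℂ (EuclideanSpace ℂ n)) i, ‖b i‖ ^ 2 = 1 := fun b i => by
    simp [b.orthonormal.1 i]
  rw [mlog_eq_cfc_log hσ, mlog_eq_cfc_log hρ, ← RCLike.re_to_complex, ← RCLike.re_to_complex,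
    hσ.1.re_trace_mul_cfc, hρ.1.re_trace_mul_cfc]
  simp only [hcross, hdiag]
  refine sum_mul_log_le_of_doublyStochastic hρ.eigenvalues_nonneg hσ.eigenvalues_nonneg
    (fun i j => by positivity) (fun i => ?_) (fun j => ?_) ?_ hkernel
  · rw [OrthonormalBasis.sum_sq_norm_inner_left, hnorm]
  · rw [OrthonormalBasis.sum_sq_norm_inner_right, hnorm]
  · rw [hρ.1.sum_eigenvalues_eq_re_trace, hσ.1.sum_eigenvalues_eq_re_trace, htr]

def qRelEntReal (ρ σ : Matrix n n ℂ) : ℝ := ((ρ * (mlog ρ - mlog σ)).trace).re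

theorem qRelEnt_of_suppLE_s6 {ρ σ : Matrix n n ℂ} (h : SuppLE ρ σ) :
    qRelEnt ρ σ = qRelEntReal ρ σ :=
  if_pos h

theorem qRelEntReal_eq_sub (ρ σ : Matrix n n ℂ) :
    qRelEntReal ρ σ = ((ρ * mlog ρ).trace).re - ((ρ * mlog σ).trace).re := by
  simp [qRelEntReal, mul_sub]

theorem qRelEntReal_nonneg {ρ σ : Matrix n n ℂ} (hρ : ρ.PosSemidef) (hσ : σ.PosSemidef)
    (htr : ρ.trace = σ.trace) (h : SuppLE ρ σ) : 0 ≤ qRelEntReal ρ σ := by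
  rw [qRelEntReal_eq_sub]
  linarith [re_trace_mul_mlog_le hρ hσ htr h]

theorem continuousOn_ite_log_insert_zero {c : ℝ} (hc : 0 < c) (d : ℝ) :
    ContinuousOn (fun x : ℝ => if x ≤ 0 then 0 else Real.log x) (insert 0 (Set.Icc c d)) := by
  refine (continuousOn_singleton _ 0).union_of_isClosed ?_ isClosed_singleton isClosed_Icc
  refine (Real.continuousOn_log.mono fun x hx => ?_).congr fun x hx => ?_
  · exact (hc.trans_le hx.1).ne'
  · exact if_neg (hc.trans_le hx.1).not_ge

open scoped Matrix.Norms.L2Operator in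
theorem tendsto_mlog_mixture {ω τ : Matrix n n ℂ} (hω : IsDensityMatrix ω)
    (hτ : IsDensityMatrix τ) (hsupp : SuppLE τ ω) :
    Tendsto (fun ε => mlog (mixture ε ω τ)) (𝓝[≥] 0) (𝓝 (mlog ω)) := by
  obtain ⟨δ, hδ0, hδ⟩ := exists_pos_le_of_pos hω.2.1.1.eigenvalues
  have hspec : ∀ ε ∈ Set.Icc (0 : ℝ) (1 / 2),
      spectrum ℝ (mixture ε ω τ) ⊆ insert 0 (Set.Icc (δ / 2) 1) := fun ε hε =>
    (spectrum_mixture_subset hω hτ hsupp hδ hε.1 (by linarith [hε.2])).trans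
      (Set.insert_subset_insert (Set.Icc_subset_Icc_left (by nlinarith [hε.2])))
  have hev : ∀ᶠ ε in 𝓝[≥] (0 : ℝ), ε ∈ Set.Icc (0 : ℝ) (1 / 2) := Icc_mem_nhdsGE (by norm_num)
  have hlim : Tendsto (fun ε => mixture ε ω τ) (𝓝[≥] 0) (𝓝 ω) := by
    simpa [mixture_zero] using ((continuous_mixture ω τ).tendsto 0).mono_left nhdsWithin_le_nhds
  refine hlim.cfc (isCompact_Icc.insert 0) _ (hev.mono hspec) ?_ ?_ hω.2.1.1.isSelfAdjoint
    (continuousOn_ite_log_insert_zero (half_pos hδ0) 1)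
  · exact hev.mono fun ε hε => (hω.2.1.mixture hτ.2.1 hε.1 (by linarith [hε.2])).1.isSelfAdjoint
  · simpa [mixture_zero] using hspec 0 (by norm_num)

theorem tendsto_qRelEntReal_mixture {ω τ : Matrix n n ℂ} (hω : IsDensityMatrix ω)
    (hτ : IsDensityMatrix τ) (hsupp : SuppLE τ ω) :
    Tendsto (fun ε => qRelEntReal τ (mixture ε ω τ)) (𝓝[≥] 0) (𝓝 (qRelEntReal τ ω)) := by
  have hcont : Continuous fun M : Matrix n n ℂ => ((τ * (mlog τ - M)).trace).re := by
    fun_prop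
  exact (hcont.tendsto _).comp (tendsto_mlog_mixture hω hτ hsupp)

end RelativeEntropy

section Ensemble

variable {n α : Type*} [Fintype n] [DecidableEq n] [Fintype α]

def ensembleHolevo (q : α → ℝ) (τ : α → Matrix n n ℂ) : ℝ :=
  vnEnt (∑ y, (q y : ℂ) • τ y) - ∑ y, q y * vnEnt (τ y)

theorem re_trace_sum_smul_mul (q : α → ℝ) (τ : α → Matrix n n ℂ) (M : Matrix n n ℂ) :
    ((∑ y, (q y : ℂ) • τ y) * M).trace.re = ∑ y, q y * ((τ y * M).trace).re := by
  simp [Finset.sum_mul, trace_sum, trace_smul]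

theorem ensembleHolevo_eq_sum (q : α → ℝ) (τ : α → Matrix n n ℂ) :
    ensembleHolevo q τ = ∑ y, q y * qRelEntReal (τ y) (∑ y', (q y' : ℂ) • τ y') := by
  simp only [ensembleHolevo, vnEnt, qRelEntReal_eq_sub, re_trace_sum_smul_mul, mul_sub,
    Finset.sum_sub_distrib, mul_neg, Finset.sum_neg_distrib]
  ring

theorem sum_mul_qRelEntReal_eq_add (q : α → ℝ) (τ : α → Matrix n n ℂ) (σ : Matrix n n ℂ) :
    ∑ y, q y * qRelEntReal (τ y) σ = ∑ y, q y * qRelEntReal (τ y) (∑ y', (q y' : ℂ) • τ y') +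
      qRelEntReal (∑ y', (q y' : ℂ) • τ y') σ := by
  simp only [qRelEntReal_eq_sub, re_trace_sum_smul_mul, mul_sub, Finset.sum_sub_distrib]
  ring

variable [DecidableEq α] {τ : α → Matrix n n ℂ} {p : α → ℝ}

theorem qRelEntReal_mixture_le_of_isMaxOn (hτ : ∀ y, IsDensityMatrix (τ y))
    (hp : p ∈ stdSimplex ℝ α) (hmax : IsMaxOn (ensembleHolevo · τ) (stdSimplex ℝ α) p)
    (z : α) {ε : ℝ} (hε0 : 0 < ε) (hε1 : ε < 1) :
    qRelEntReal (τ z) (mixture ε (∑ y, (p y : ℂ) • τ y) (τ z)) ≤ ensembleHolevo p τ := by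
  set ω := ∑ y, (p y : ℂ) • τ y
  set q : α → ℝ := (1 - ε) • p + ε • Pi.single z 1
  have hq : q ∈ stdSimplex ℝ α :=
    convex_stdSimplex ℝ α hp (single_mem_stdSimplex ℝ z) (by linarith) hε0.le (by ring)
  have hωq : ∑ y, (q y : ℂ) • τ y = mixture ε ω (τ z) := by
    simp [q, ω, mixture, add_smul, mul_smul, Finset.sum_add_distrib, Finset.smul_sum,
      Pi.single_apply]
  have hsum : ∀ f : α → ℝ, ∑ y, q y * f y = (1 - ε) * ∑ y, p y * f y + ε * f z := fun f => by
    simp [q, add_mul, mul_assoc, Finset.sum_add_distrib, Finset.mul_sum, Pi.single_apply]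
  have hω : IsDensityMatrix ω := IsDensityMatrix.sum_smul hp hτ
  have hKlein : 0 ≤ qRelEntReal ω (mixture ε ω (τ z)) := by
    refine qRelEntReal_nonneg hω.2.1 (hω.2.1.mixture (hτ z).2.1 hε0.le hε1.le)
      (by simp [trace_mixture, hω.2.2, (hτ z).2.2])
      (suppLE_of_posSemidef_sub_smul hω.2.1 (sub_pos.2 hε1) ?_)
    rw [mixture_sub_smul]
    exact (hτ z).2.1.smul (Complex.zero_le_real.2 hε0.le)
  have hq_le : ensembleHolevo q τ ≤ ensembleHolevo p τ := hmax hq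
  rw [ensembleHolevo_eq_sum, hωq, hsum, sum_mul_qRelEntReal_eq_add p τ,
    ← ensembleHolevo_eq_sum] at hq_le
  have : ε * qRelEntReal (τ z) (mixture ε ω (τ z)) ≤ ε * ensembleHolevo p τ := by
    nlinarith
  exact le_of_mul_le_mul_left this hε0

theorem qRelEntReal_le_of_isMaxOn (hτ : ∀ y, IsDensityMatrix (τ y)) (hp : p ∈ stdSimplex ℝ α)
    (hmax : IsMaxOn (ensembleHolevo · τ) (stdSimplex ℝ α) p) {z : α}
    (hz : SuppLE (τ z) (∑ y, (p y : ℂ) • τ y)) :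
    qRelEntReal (τ z) (∑ y, (p y : ℂ) • τ y) ≤ ensembleHolevo p τ := by
  have hlim := tendsto_qRelEntReal_mixture (IsDensityMatrix.sum_smul hp hτ) (hτ z) hz
  refine le_of_tendsto (hlim.mono_left (nhdsWithin_mono _ Set.Ioi_subset_Ici_self)) ?_
  filter_upwards [Ioo_mem_nhdsGT zero_lt_one] with ε hε
  exact qRelEntReal_mixture_le_of_isMaxOn hτ hp hmax z hε.1 hε.2

end Ensemble

section Channel

variable {α β : Type*} [Fintype α] [Fintype β] {𝒩 : Matrix α α ℂ →ₗ[ℂ] Matrix β β ℂ}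

theorem IsQChannel.posSemidef_map (h𝒩 : IsQChannel 𝒩) {ρ : Matrix α α ℂ} (hρ : ρ.PosSemidef) :
    (𝒩 ρ).PosSemidef := by
  have h := h𝒩.completely_positive 1 _ (hρ.submatrix (Equiv.prodUnique α (Fin 1)))
  rwa [show ampliate 1 𝒩 (ρ.submatrix (Equiv.prodUnique α (Fin 1)) (Equiv.prodUnique α (Fin 1)))
      = (𝒩 ρ).submatrix (Equiv.prodUnique β (Fin 1)) (Equiv.prodUnique β (Fin 1)) from rfl,
    posSemidef_submatrix_equiv] at h

theorem IsQChannel.isDensityMatrix_map (h𝒩 : IsQChannel 𝒩) {ρ : Matrix α α ℂ}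
    (hρ : IsDensityMatrix ρ) : IsDensityMatrix (𝒩 ρ) :=
  ⟨(h𝒩.posSemidef_map hρ.2.1).1, h𝒩.posSemidef_map hρ.2.1, (h𝒩.trace_preserving ρ).trans hρ.2.2⟩

end Channel

/-- if a finite ensemble `{(p̄_x, ρ̄_x)}` achieves the Holevo quantity `χ(𝒩)`
(assumed finite), and `ω = Σ_x p̄_x 𝒩(ρ̄_x)`, then `D(𝒩(ρ̄_x)‖ω) = χ(𝒩)` for every `x` with
`p̄_x > 0`. -/
theorem relEnt_eq_holevo_of_pos {dA dB : ℕ}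
    (𝒩 : Matrix (Fin dA) (Fin dA) ℂ →ₗ[ℂ] Matrix (Fin dB) (Fin dB) ℂ)
    (h𝒩 : IsQChannel 𝒩)
    (hfin : BddAbove (holevoSet ⇑𝒩))
    {m : ℕ} (p : Fin m → ℝ) (ρb : Fin m → Matrix (Fin dA) (Fin dA) ℂ)
    (hp : ∀ x, 0 ≤ p x) (hp1 : ∑ x, p x = 1) (hρb : ∀ x, IsDensityMatrix (ρb x))
    (hach : vnEnt (∑ x, ((p x : ℝ) : ℂ) • 𝒩 (ρb x)) - ∑ x, p x * vnEnt (𝒩 (ρb x))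
      = holevo ⇑𝒩) :
    ∀ x, 0 < p x →
      qRelEnt (𝒩 (ρb x)) (∑ y, ((p y : ℝ) : ℂ) • 𝒩 (ρb y)) = ((holevo ⇑𝒩 : ℝ) : EReal) := by
  intro x hx
  have hτ : ∀ y, IsDensityMatrix (𝒩 (ρb y)) := fun y => h𝒩.isDensityMatrix_map (hρb y)
  have hsimplex : p ∈ stdSimplex ℝ (Fin m) := ⟨hp, hp1⟩
  have hχ : ensembleHolevo p (fun y => 𝒩 (ρb y)) = holevo ⇑𝒩 := hach
  have hsupp : ∀ y, 0 < p y → SuppLE (𝒩 (ρb y)) (∑ y, ((p y : ℝ) : ℂ) • 𝒩 (ρb y)) :=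
    fun y hy => suppLE_sum_smul_s6 hp (fun y => (hτ y).2.1) hy
  have hmax : IsMaxOn (ensembleHolevo · fun y => 𝒩 (ρb y)) (stdSimplex ℝ (Fin m)) p :=
    fun q hq => (le_csSup hfin ⟨m, q, ρb, hq.1, hq.2, hρb, rfl⟩).trans_eq hχ.symm
  have hD : qRelEntReal (𝒩 (ρb x)) (∑ y, ((p y : ℝ) : ℂ) • 𝒩 (ρb y)) = holevo ⇑𝒩 :=
    hχ ▸ eq_of_sum_mul_eq_of_le hsimplex
      (fun y hy => qRelEntReal_le_of_isMaxOn hτ hsimplex hmax (hsupp y hy))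
      (ensembleHolevo_eq_sum _ _).symm hx
  rw [qRelEnt_of_suppLE_s6 (hsupp x hx), hD]
end
end

section
/- (Uniqueness of the optimal output state.) Let 𝒩 be a quantum channel from d_A×d_A to d_B×d_B complex matrices with χ(𝒩) finite. If {(p̄_x, ρ̄_x)} and {(p̃_z, ρ̃_z)} are two finite ensembles each achieving the Holevo quantity, i.e. H(Σ p̄_x 𝒩(ρ̄_x)) − Σ p̄_x H(𝒩(ρ̄_x)) = χ(𝒩) and H(Σ p̃_z 𝒩(ρ̃_z)) − Σ p̃_z H(𝒩(ρ̃_z)) = χ(𝒩), then Σ_x p̄_x 𝒩(ρ̄_x) = Σ_z p̃_z 𝒩(ρ̃_z). -/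
open Matrix BigOperators Filter ComplexOrder

attribute [local instance] Classical.propDecidable

noncomputable section

variable {ι κ : Type*} [Fintype ι] [DecidableEq ι] [Fintype κ] [DecidableEq κ]

section Aux

set_option linter.unusedTactic false


noncomputable def flog : ℝ → ℝ := fun x => if x ≤ 0 then 0 else Real.log x

lemma flog_pos {x : ℝ} (hx : 0 < x) : flog x = Real.log x := by
  simp [flog, not_le.2 hx]

lemma klein_pointwise {a b c : ℝ} (ha : 0 ≤ a) (hb : 0 ≤ b) (hc : 0 ≤ c)
    (hsupp : b = 0 → a * c = 0) :
    c * (a - b) ≤ c * (a * flog a - a * flog b) ∧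
      (c * (a * flog a - a * flog b) = c * (a - b) → c ≠ 0 → a = b) := by
  rcases eq_or_lt_of_le hc with hc0 | hc0
  · simp [← hc0]
  rcases eq_or_lt_of_le ha with ha0 | ha0
  · have h1 : a * flog a - a * flog b = 0 := by rw [← ha0]; ring
    rw [h1, ← ha0, zero_sub, mul_zero, mul_neg]
    refine ⟨neg_nonpos.2 (mul_nonneg hc hb), fun h _ => ?_⟩
    have hcb : c * b = 0 := by linarith
    rcases mul_eq_zero.1 hcb with h' | h'
    · exact absurd h' hc0.ne'
    · exact h'.symm
  · rcases eq_or_lt_of_le hb with hb0 | hb0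
    · exfalso
      have := hsupp hb0.symm
      rcases mul_eq_zero.1 this with h' | h'
      · exact ha0.ne' h'
      · exact hc0.ne' h'
    · rw [flog_pos ha0, flog_pos hb0]
      have hlog : Real.log b - Real.log a ≤ b / a - 1 := by
        have h := Real.log_le_sub_one_of_pos (div_pos hb0 ha0)
        rwa [Real.log_div hb0.ne' ha0.ne'] at h
      constructor
      · have hE : a - b ≤ a * Real.log a - a * Real.log b := by
          have h2 := mul_le_mul_of_nonneg_left hlog ha0.le
          have hba : a * (b / a) = b := by field_simp
          nlinarith [h2, hba]
        exact mul_le_mul_of_nonneg_left hE hc0.le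
      · intro heq _
        have hE : a * Real.log a - a * Real.log b = a - b :=
          mul_left_cancel₀ hc0.ne' heq
        by_contra hab
        have hne : b / a ≠ 1 := by
          intro h1
          exact hab ((div_eq_one_iff_eq ha0.ne').1 h1).symm
        have h := Real.log_lt_sub_one_of_pos (div_pos hb0 ha0) hne
        rw [Real.log_div hb0.ne' ha0.ne'] at h
        have h2 := mul_lt_mul_of_pos_left h ha0
        have hba : a * (b / a) = b := by field_simp
        nlinarith [h2, hba]

lemma klein_scalar {ι : Type*} [Fintype ι] (lam mu : ι → ℝ) (w : ι → ι → ℝ)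
    (hlam : ∀ j, 0 ≤ lam j) (hmu : ∀ k, 0 ≤ mu k) (hw : ∀ j k, 0 ≤ w j k)
    (hrow : ∀ j, ∑ k, w j k = 1) (hcol : ∀ k, ∑ j, w j k = 1)
    (hlam1 : ∑ j, lam j = 1) (hmu1 : ∑ k, mu k = 1)
    (hsupp : ∀ j k, mu k = 0 → lam j * w j k = 0) :
    0 ≤ ∑ j, ∑ k, w j k * (lam j * flog (lam j) - lam j * flog (mu k)) ∧
      (∑ j, ∑ k, w j k * (lam j * flog (lam j) - lam j * flog (mu k)) = 0 →
        ∀ j k, w j k ≠ 0 → lam j = mu k) := by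
  have key := fun j k => klein_pointwise (hlam j) (hmu k) (hw j k)
    (fun h => hsupp j k h)
  have e1 : ∑ j, ∑ k, w j k * lam j = 1 := by
    have h : ∀ j, ∑ k, w j k * lam j = lam j := fun j => by
      rw [← Finset.sum_mul, hrow j, one_mul]
    simp only [h, hlam1]
  have e2 : ∑ j, ∑ k, w j k * mu k = 1 := by
    rw [Finset.sum_comm]
    have h : ∀ k, ∑ j, w j k * mu k = mu k := fun k => by
      rw [← Finset.sum_mul, hcol k, one_mul]
    simp only [h, hmu1]
  have hsum0 : ∑ j, ∑ k, w j k * (lam j - mu k) = 0 := by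
    simp only [mul_sub, Finset.sum_sub_distrib]
    rw [e1, e2, sub_self]
  constructor
  · have h := Finset.sum_le_sum (fun j (_ : j ∈ Finset.univ) =>
      Finset.sum_le_sum (fun k (_ : k ∈ Finset.univ) => (key j k).1))
    rw [hsum0] at h
    exact h
  · intro hD j k hwjk
    have hnn : ∀ j k, 0 ≤ w j k * (lam j * flog (lam j) - lam j * flog (mu k))
        - w j k * (lam j - mu k) := fun j k => sub_nonneg.2 (key j k).1
    have hzero : ∑ j, ∑ k, (w j k * (lam j * flog (lam j) - lam j * flog (mu k))
        - w j k * (lam j - mu k)) = 0 := by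
      simp only [Finset.sum_sub_distrib]
      rw [hD, hsum0, sub_self]
    have houter := (Finset.sum_eq_zero_iff_of_nonneg (fun j _ =>
      Finset.sum_nonneg (fun k _ => hnn j k))).1 hzero j (Finset.mem_univ j)
    have hterm := (Finset.sum_eq_zero_iff_of_nonneg (fun k _ => hnn j k)).1 houter k
      (Finset.mem_univ k)
    exact (key j k).2 (by linarith) hwjk

variable {ι : Type*} [Fintype ι] [DecidableEq ι]

lemma tr_core (d e : ι → ℂ) (W : Matrix ι ι ℂ) :
    (diagonal d * W * diagonal e * Wᴴ).trace = ∑ j, ∑ k, d j * e k * (W j k * star (W j k)) := by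
  simp only [Matrix.trace, Matrix.diag, Matrix.mul_apply, Matrix.diagonal_apply,
    conjTranspose_apply, Finset.sum_mul, Finset.mul_sum, mul_ite, ite_mul, zero_mul, mul_zero,
    Finset.sum_ite_eq, Finset.sum_ite_eq', Finset.mem_univ, if_true]
  refine Finset.sum_congr rfl fun j _ => Finset.sum_congr rfl fun k _ => by ring

lemma tr_aux (d e : ι → ℂ) (U V : Matrix ι ι ℂ) :
    ((U * diagonal d * star U) * (V * diagonal e * star V)).trace
      = ∑ j, ∑ k, d j * e k * ((star U * V) j k * star ((star U * V) j k)) := by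
  have h1 : (U * diagonal d * star U) * (V * diagonal e * star V)
      = U * (diagonal d * star U * (V * diagonal e * star V)) := by
    simp only [mul_assoc]
  rw [h1, Matrix.trace_mul_comm]
  have h2 : diagonal d * star U * (V * diagonal e * star V) * U
      = diagonal d * (star U * V) * diagonal e * (star U * V)ᴴ := by
    simp only [star_eq_conjTranspose, conjTranspose_mul, conjTranspose_conjTranspose, mul_assoc]
  rw [h2, tr_core]

lemma trace_mul_cfc {ρ τ : Matrix ι ι ℂ} (hρ : ρ.IsHermitian) (hτ : τ.IsHermitian) (g : ℝ → ℝ) :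
    (ρ * cfc g τ).trace = ((∑ j, ∑ k, hρ.eigenvalues j * g (hτ.eigenvalues k) *
      Complex.normSq ((star (hρ.eigenvectorUnitary : Matrix ι ι ℂ) *
        (hτ.eigenvectorUnitary : Matrix ι ι ℂ)) j k) : ℝ) : ℂ) := by
  conv_lhs => rw [hρ.spectral_theorem, hτ.cfc_eq g]
  unfold Matrix.IsHermitian.cfc
  simp only [Unitary.conjStarAlgAut_apply, Unitary.coe_star]
  rw [tr_aux]
  push_cast
  refine Finset.sum_congr rfl fun j _ => Finset.sum_congr rfl fun k _ => ?_
  rw [RCLike.star_def, Complex.mul_conj]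
  push_cast
  simp [Function.comp]

lemma trace_mul_cfc_self {ρ : Matrix ι ι ℂ} (hρ : ρ.IsHermitian) (g : ℝ → ℝ) :
    (ρ * cfc g ρ).trace = ((∑ j, hρ.eigenvalues j * g (hρ.eigenvalues j) : ℝ) : ℂ) := by
  rw [hρ.cfc_eq g]
  nth_rewrite 1 [hρ.spectral_theorem]
  unfold Matrix.IsHermitian.cfc
  simp only [Unitary.conjStarAlgAut_apply, Unitary.coe_star]
  rw [tr_aux]
  rw [show star (hρ.eigenvectorUnitary : Matrix ι ι ℂ) * (hρ.eigenvectorUnitary : Matrix ι ι ℂ)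
      = 1 from Unitary.coe_star_mul_self hρ.eigenvectorUnitary]
  push_cast
  refine Finset.sum_congr rfl fun j _ => ?_
  rw [Finset.sum_eq_single j]
  · simp [Matrix.one_apply, Function.comp]
  · intro k _ hk
    simp [Matrix.one_apply, Ne.symm hk]
  · simp

lemma trace_eq_sum_eigs {ρ : Matrix ι ι ℂ} (hρ : ρ.IsHermitian) :
    ρ.trace = ((∑ j, hρ.eigenvalues j : ℝ) : ℂ) := by
  nth_rewrite 1 [hρ.spectral_theorem]
  simp only [Unitary.conjStarAlgAut_apply, Unitary.coe_star]
  rw [Matrix.trace_mul_cycle,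
    Unitary.coe_star_mul_self hρ.eigenvectorUnitary, one_mul, Matrix.trace_diagonal]
  push_cast
  simp [Function.comp]

lemma klein_matrix {ρ τ : Matrix ι ι ℂ} (hρ : ρ.PosSemidef) (hτ : τ.PosSemidef)
    (hρ1 : ρ.trace = 1) (hτ1 : τ.trace = 1)
    (hsupp : ∀ v : ι → ℂ, τ.mulVec v = 0 → ρ.mulVec v = 0) :
    0 ≤ (ρ * (cfc flog ρ - cfc flog τ)).trace.re ∧
      ((ρ * (cfc flog ρ - cfc flog τ)).trace.re = 0 → ρ = τ) := by
  have hHρ : ρ.IsHermitian := hρ.isHermitian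
  have hHτ : τ.IsHermitian := hτ.isHermitian
  set lam : ι → ℝ := hHρ.eigenvalues with hlamdef
  set mu : ι → ℝ := hHτ.eigenvalues with hmudef
  set U : Matrix ι ι ℂ := (hHρ.eigenvectorUnitary : Matrix ι ι ℂ) with hUdef
  set V : Matrix ι ι ℂ := (hHτ.eigenvectorUnitary : Matrix ι ι ℂ) with hVdef
  set W : Matrix ι ι ℂ := star U * V with hWdef
  set w : ι → ι → ℝ := fun j k => Complex.normSq (W j k) with hwdef
  have hU1 : U * star U = 1 := Unitary.coe_mul_star_self hHρ.eigenvectorUnitary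
  have hU2 : star U * U = 1 := Unitary.coe_star_mul_self hHρ.eigenvectorUnitary
  have hV1 : V * star V = 1 := Unitary.coe_mul_star_self hHτ.eigenvectorUnitary
  have hV2 : star V * V = 1 := Unitary.coe_star_mul_self hHτ.eigenvectorUnitary
  have hWstar : star W = star V * U := by rw [hWdef, StarMul.star_mul, star_star]
  have hWW : W * star W = 1 := by
    rw [hWstar, hWdef, mul_assoc, ← mul_assoc V, hV1, one_mul, hU2]
  have hWW' : star W * W = 1 := by
    rw [hWstar, hWdef, mul_assoc, ← mul_assoc U, hU1, one_mul, hV2]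
  have hrow : ∀ j, ∑ k, w j k = 1 := by
    intro j
    have h : (W * star W) j j = (1 : Matrix ι ι ℂ) j j := by rw [hWW]
    rw [Matrix.mul_apply, Matrix.one_apply_eq] at h
    simp only [Matrix.star_apply, RCLike.star_def, Complex.mul_conj] at h
    exact_mod_cast h
  have hcol : ∀ k, ∑ j, w j k = 1 := by
    intro k
    have h : (star W * W) k k = (1 : Matrix ι ι ℂ) k k := by rw [hWW']
    rw [Matrix.mul_apply, Matrix.one_apply_eq] at h
    simp only [Matrix.star_apply, RCLike.star_def, mul_comm, Complex.mul_conj] at h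
    exact_mod_cast h
  have hw0 : ∀ j k, 0 ≤ w j k := fun j k => Complex.normSq_nonneg _
  have hlam0 : ∀ j, 0 ≤ lam j := fun j => hρ.eigenvalues_nonneg j
  have hmu0 : ∀ k, 0 ≤ mu k := fun k => hτ.eigenvalues_nonneg k
  have hlam1 : ∑ j, lam j = 1 := by
    have := trace_eq_sum_eigs hHρ
    rw [hρ1] at this
    exact_mod_cast this.symm
  have hmu1 : ∑ k, mu k = 1 := by
    have := trace_eq_sum_eigs hHτ
    rw [hτ1] at this
    exact_mod_cast this.symm
  -- support condition
  have hτV : τ * V = V * diagonal (RCLike.ofReal ∘ mu) := by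
    conv_lhs => rw [hHτ.spectral_theorem]
    simp only [Unitary.conjStarAlgAut_apply, Unitary.coe_star]
    rw [← hVdef]
    rw [mul_assoc, hV2, mul_one]
  have hDW : star U * (ρ * V) = diagonal (RCLike.ofReal ∘ lam) * W := by
    conv_lhs => rw [hHρ.spectral_theorem]
    simp only [Unitary.conjStarAlgAut_apply, Unitary.coe_star]
    rw [← hUdef]
    rw [hWdef]
    simp only [← mul_assoc]
    rw [hU2, one_mul, mul_assoc]
  have hsupp' : ∀ j k, mu k = 0 → lam j * w j k = 0 := by
    intro j k hk
    have hv : τ.mulVec (fun i => V i k) = 0 := by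
      funext i
      have h1 : τ.mulVec (fun i => V i k) i = (τ * V) i k := by
        simp [Matrix.mulVec, Matrix.mul_apply, dotProduct]
      rw [h1, hτV, Matrix.mul_diagonal]
      simp [hk]
    have hρv := hsupp _ hv
    have hcolzero : ∀ i, (ρ * V) i k = 0 := by
      intro i
      have h1 : (ρ * V) i k = ρ.mulVec (fun i => V i k) i := by
        simp [Matrix.mulVec, Matrix.mul_apply, dotProduct]
      rw [h1, hρv]
      rfl
    have hentry : ((lam j : ℝ) : ℂ) * W j k = 0 := by
      have h1 : (star U * (ρ * V)) j k = 0 := by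
        rw [Matrix.mul_apply]
        simp [hcolzero]
      rw [hDW, Matrix.diagonal_mul] at h1
      exact h1
    rcases mul_eq_zero.1 hentry with h | h
    · rw [show lam j = 0 from by exact_mod_cast h, zero_mul]
    · rw [hwdef]
      simp [h]
  -- the trace as a double sum
  have hD : (ρ * (cfc flog ρ - cfc flog τ)).trace.re
      = ∑ j, ∑ k, w j k * (lam j * flog (lam j) - lam j * flog (mu k)) := by
    rw [mul_sub, Matrix.trace_sub, trace_mul_cfc_self hHρ flog, trace_mul_cfc hHρ hHτ flog]
    rw [Complex.sub_re, Complex.ofReal_re, Complex.ofReal_re]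
    have h1 : ∑ j, lam j * flog (lam j) = ∑ j, ∑ k, w j k * (lam j * flog (lam j)) := by
      refine Finset.sum_congr rfl fun j _ => ?_
      rw [← Finset.sum_mul, hrow j, one_mul]
    rw [h1]
    simp only [mul_sub, Finset.sum_sub_distrib]
    congr 1
    refine Finset.sum_congr rfl fun j _ => Finset.sum_congr rfl fun k _ => by ring
  have hks := klein_scalar lam mu w hlam0 hmu0 hw0 hrow hcol hlam1 hmu1 hsupp'
  rw [hD]
  refine ⟨hks.1, fun h0 => ?_⟩
  have heq := hks.2 h0
  -- from eigenvalue matching to matrix equality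
  have hDWmu : diagonal (RCLike.ofReal ∘ lam) * W = W * diagonal (RCLike.ofReal ∘ mu) := by
    ext j k
    rw [Matrix.diagonal_mul, Matrix.mul_diagonal]
    by_cases hW0 : W j k = 0
    · rw [hW0, mul_zero, zero_mul]
    · have hwne : w j k ≠ 0 := by
        rw [hwdef]
        simpa [Complex.normSq_eq_zero] using hW0
      rw [show (RCLike.ofReal ∘ lam) j = (RCLike.ofReal ∘ mu) k from by
        simp [Function.comp, heq j k hwne], mul_comm]
  calc ρ = U * diagonal (RCLike.ofReal ∘ lam) * star U := hHρ.spectral_theorem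
    _ = U * (diagonal (RCLike.ofReal ∘ lam) * W) * star V := by
        rw [hWdef]
        simp only [← mul_assoc]
        rw [mul_assoc _ V (star V), hV1, mul_one]
    _ = U * (W * diagonal (RCLike.ofReal ∘ mu)) * star V := by rw [hDWmu]
    _ = V * diagonal (RCLike.ofReal ∘ mu) * star V := by
        rw [hWdef]
        simp only [← mul_assoc]
        rw [hU1, one_mul]
    _ = τ := hHτ.spectral_theorem.symm


lemma mlog_eq_cfc_flog (ρ : Matrix ι ι ℂ) : mlog ρ = cfc flog ρ := rfl

/-- PSD is preserved by nonnegative real scalar multiplication. -/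
lemma psd_smul {M : Matrix ι ι ℂ} (hM : M.PosSemidef) {c : ℝ} (hc : 0 ≤ c) :
    (((c : ℝ) : ℂ) • M).PosSemidef := by
  refine Matrix.PosSemidef.of_dotProduct_mulVec_nonneg ?_ ?_
  · rw [Matrix.IsHermitian, Matrix.conjTranspose_smul, hM.1]
    congr 1
    simp
  · intro x
    rw [Matrix.smul_mulVec, dotProduct_smul, smul_eq_mul]
    exact mul_nonneg (by exact_mod_cast Complex.zero_le_real.2 hc) (hM.dotProduct_mulVec_nonneg x)

lemma psd_sum {n : ℕ} (f : Fin n → Matrix ι ι ℂ) (h : ∀ i, (f i).PosSemidef) :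
    (∑ i, f i).PosSemidef :=
  Finset.sum_induction f Matrix.PosSemidef (fun _ _ ha hb => ha.add hb)
    Matrix.PosSemidef.zero (fun i _ => h i)

/-- A quantum channel maps PSD matrices to PSD matrices. -/
lemma channel_psd {𝒩 : Matrix ι ι ℂ →ₗ[ℂ] Matrix κ κ ℂ} (h : IsQChannel 𝒩)
    {ρ : Matrix ι ι ℂ} (hρ : ρ.PosSemidef) : (𝒩 ρ).PosSemidef := by
  have hV : (ρ.submatrix (Prod.fst : ι × Fin 1 → ι) Prod.fst).PosSemidef :=
    hρ.submatrix _
  have h2 := h.completely_positive 1 _ hV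
  have h3 : 𝒩 ρ = (ampliate 1 𝒩 (ρ.submatrix Prod.fst Prod.fst)).submatrix
      (fun x : κ => (x, (0 : Fin 1))) (fun x => (x, 0)) := by
    ext a b
    simp only [ampliate, Matrix.submatrix_apply, Matrix.of_apply]
    rfl
  rw [h3]
  exact h2.submatrix _

end Aux

/-- Uniqueness of the optimal output state: two finite ensembles achieving the
(finite) Holevo quantity induce the same output state. -/
theorem optimal_output_unique {dA dB : ℕ}
    (𝒩 : Matrix (Fin dA) (Fin dA) ℂ →ₗ[ℂ] Matrix (Fin dB) (Fin dB) ℂ)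
    (h𝒩 : IsQChannel 𝒩)
    (hfin : BddAbove (holevoSet ⇑𝒩))
    {m₁ m₂ : ℕ} (p : Fin m₁ → ℝ) (ρb : Fin m₁ → Matrix (Fin dA) (Fin dA) ℂ)
    (q : Fin m₂ → ℝ) (ρt : Fin m₂ → Matrix (Fin dA) (Fin dA) ℂ)
    (hp : ∀ x, 0 ≤ p x) (hp1 : ∑ x, p x = 1) (hρb : ∀ x, IsDensityMatrix (ρb x))
    (hq : ∀ z, 0 ≤ q z) (hq1 : ∑ z, q z = 1) (hρt : ∀ z, IsDensityMatrix (ρt z))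
    (hach₁ : vnEnt (∑ x, ((p x : ℝ) : ℂ) • 𝒩 (ρb x)) - ∑ x, p x * vnEnt (𝒩 (ρb x))
      = holevo ⇑𝒩)
    (hach₂ : vnEnt (∑ z, ((q z : ℝ) : ℂ) • 𝒩 (ρt z)) - ∑ z, q z * vnEnt (𝒩 (ρt z))
      = holevo ⇑𝒩) :
    ∑ x, ((p x : ℝ) : ℂ) • 𝒩 (ρb x) = ∑ z, ((q z : ℝ) : ℂ) • 𝒩 (ρt z) := by
  classical
  set σ1 : Matrix (Fin dB) (Fin dB) ℂ := ∑ x, ((p x : ℝ) : ℂ) • 𝒩 (ρb x) with hσ1def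
  set σ2 : Matrix (Fin dB) (Fin dB) ℂ := ∑ z, ((q z : ℝ) : ℂ) • 𝒩 (ρt z) with hσ2def
  set τ : Matrix (Fin dB) (Fin dB) ℂ := (2⁻¹ : ℂ) • σ1 + (2⁻¹ : ℂ) • σ2 with hτdef
  -- basic properties of the output states
  have hσ1psd : σ1.PosSemidef :=
    psd_sum _ (fun x => psd_smul (channel_psd h𝒩 (hρb x).2.1) (hp x))
  have hσ2psd : σ2.PosSemidef :=
    psd_sum _ (fun z => psd_smul (channel_psd h𝒩 (hρt z).2.1) (hq z))
  have hσ1tr : σ1.trace = 1 := by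
    rw [hσ1def, Matrix.trace_sum]
    have : ∀ x, (((p x : ℝ) : ℂ) • 𝒩 (ρb x)).trace = ((p x : ℝ) : ℂ) := by
      intro x
      rw [Matrix.trace_smul, h𝒩.trace_preserving, (hρb x).2.2, smul_eq_mul, mul_one]
    rw [Finset.sum_congr rfl (fun x _ => this x), ← Complex.ofReal_sum, hp1,
      Complex.ofReal_one]
  have hσ2tr : σ2.trace = 1 := by
    rw [hσ2def, Matrix.trace_sum]
    have : ∀ z, (((q z : ℝ) : ℂ) • 𝒩 (ρt z)).trace = ((q z : ℝ) : ℂ) := by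
      intro z
      rw [Matrix.trace_smul, h𝒩.trace_preserving, (hρt z).2.2, smul_eq_mul, mul_one]
    rw [Finset.sum_congr rfl (fun z _ => this z), ← Complex.ofReal_sum, hq1,
      Complex.ofReal_one]
  have h2inv : ((2⁻¹ : ℝ) : ℂ) = (2⁻¹ : ℂ) := by norm_num
  have hτpsd : τ.PosSemidef := by
    rw [hτdef]
    exact ((h2inv ▸ psd_smul hσ1psd (by norm_num : (0:ℝ) ≤ 2⁻¹))).add
      ((h2inv ▸ psd_smul hσ2psd (by norm_num : (0:ℝ) ≤ 2⁻¹)))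
  have hτtr : τ.trace = 1 := by
    rw [hτdef, Matrix.trace_add, Matrix.trace_smul, Matrix.trace_smul, hσ1tr, hσ2tr]
    norm_num
  -- the mixed ensemble
  set pc : Fin (m₁ + m₂) → ℝ := Fin.append (fun x => p x / 2) (fun z => q z / 2) with hpcdef
  set ρc : Fin (m₁ + m₂) → Matrix (Fin dA) (Fin dA) ℂ := Fin.append ρb ρt with hρcdef
  have hpc0 : ∀ x, 0 ≤ pc x := by
    intro i
    refine Fin.addCases (fun i => ?_) (fun i => ?_) i
    · rw [hpcdef, Fin.append_left]; exact div_nonneg (hp i) (by norm_num)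
    · rw [hpcdef, Fin.append_right]; exact div_nonneg (hq i) (by norm_num)
  have hpc1 : ∑ x, pc x = 1 := by
    rw [hpcdef, Fin.sum_univ_add]
    simp only [Fin.append_left, Fin.append_right]
    rw [← Finset.sum_div, ← Finset.sum_div, hp1, hq1]
    norm_num
  have hρc : ∀ x, IsDensityMatrix (ρc x) := by
    intro i
    refine Fin.addCases (fun i => ?_) (fun i => ?_) i
    · rw [hρcdef, Fin.append_left]; exact hρb i
    · rw [hρcdef, Fin.append_right]; exact hρt i
  have hsum : ∑ x, ((pc x : ℝ) : ℂ) • 𝒩 (ρc x) = τ := by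
    rw [hpcdef, hρcdef, Fin.sum_univ_add]
    simp only [Fin.append_left, Fin.append_right]
    rw [hτdef, hσ1def, hσ2def, Finset.smul_sum, Finset.smul_sum]
    congr 1
    · refine Finset.sum_congr rfl fun x _ => ?_
      rw [smul_smul]
      congr 1
      push_cast
      ring
    · refine Finset.sum_congr rfl fun z _ => ?_
      rw [smul_smul]
      congr 1
      push_cast
      ring
  have hentsum : ∑ x, pc x * vnEnt (𝒩 (ρc x))
      = (∑ x, p x * vnEnt (𝒩 (ρb x))) / 2 + (∑ z, q z * vnEnt (𝒩 (ρt z))) / 2 := by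
    rw [hpcdef, hρcdef, Fin.sum_univ_add]
    simp only [Fin.append_left, Fin.append_right]
    rw [Finset.sum_div, Finset.sum_div]
    congr 1
    · exact Finset.sum_congr rfl fun x _ => by ring
    · exact Finset.sum_congr rfl fun z _ => by ring
  -- membership in the Holevo set and the key entropy inequality
  have hmem : vnEnt (∑ x, ((pc x : ℝ) : ℂ) • 𝒩 (ρc x)) - ∑ x, pc x * vnEnt (𝒩 (ρc x))
      ∈ holevoSet ⇑𝒩 := ⟨m₁ + m₂, pc, ρc, hpc0, hpc1, hρc, rfl⟩
  have hle := le_csSup hfin hmem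
  rw [hsum, hentsum] at hle
  have key : vnEnt τ ≤ vnEnt σ1 / 2 + vnEnt σ2 / 2 := by
    unfold holevo at hach₁ hach₂
    linarith [hle, hach₁, hach₂]
  -- relative entropies
  set D1 : ℝ := (σ1 * (cfc flog σ1 - cfc flog τ)).trace.re with hD1def
  set D2 : ℝ := (σ2 * (cfc flog σ2 - cfc flog τ)).trace.re with hD2def
  -- support conditions
  have hsupp1 : ∀ v : Fin dB → ℂ, τ.mulVec v = 0 → σ1.mulVec v = 0 := by
    intro v hv
    have h0 : star v ⬝ᵥ τ.mulVec v = 0 := by rw [hv, dotProduct_zero]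
    rw [hτdef, Matrix.add_mulVec, Matrix.smul_mulVec, Matrix.smul_mulVec,
      dotProduct_add, dotProduct_smul, dotProduct_smul] at h0
    have ha : (0 : ℂ) ≤ star v ⬝ᵥ σ1.mulVec v := hσ1psd.dotProduct_mulVec_nonneg v
    have hb : (0 : ℂ) ≤ star v ⬝ᵥ σ2.mulVec v := hσ2psd.dotProduct_mulVec_nonneg v
    have h2 : (0 : ℂ) ≤ (2⁻¹ : ℂ) := by
      rw [← h2inv]
      exact_mod_cast Complex.zero_le_real.2 (by norm_num)
    have haz : (2⁻¹ : ℂ) • (star v ⬝ᵥ σ1.mulVec v) = 0 := by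
      have h1 := (add_eq_zero_iff_of_nonneg
        (smul_nonneg h2 ha) (smul_nonneg h2 hb)).1 h0
      exact h1.1
    have : star v ⬝ᵥ σ1.mulVec v = 0 := by
      rw [smul_eq_mul] at haz
      rcases mul_eq_zero.1 haz with h' | h'
      · norm_num at h'
      · exact h'
    exact (hσ1psd.dotProduct_mulVec_zero_iff v).1 this
  have hsupp2 : ∀ v : Fin dB → ℂ, τ.mulVec v = 0 → σ2.mulVec v = 0 := by
    intro v hv
    have h0 : star v ⬝ᵥ τ.mulVec v = 0 := by rw [hv, dotProduct_zero]
    rw [hτdef, Matrix.add_mulVec, Matrix.smul_mulVec, Matrix.smul_mulVec,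
      dotProduct_add, dotProduct_smul, dotProduct_smul] at h0
    have ha : (0 : ℂ) ≤ star v ⬝ᵥ σ1.mulVec v := hσ1psd.dotProduct_mulVec_nonneg v
    have hb : (0 : ℂ) ≤ star v ⬝ᵥ σ2.mulVec v := hσ2psd.dotProduct_mulVec_nonneg v
    have h2 : (0 : ℂ) ≤ (2⁻¹ : ℂ) := by
      rw [← h2inv]
      exact_mod_cast Complex.zero_le_real.2 (by norm_num)
    have haz : (2⁻¹ : ℂ) • (star v ⬝ᵥ σ2.mulVec v) = 0 := by
      have h1 := (add_eq_zero_iff_of_nonneg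
        (smul_nonneg h2 ha) (smul_nonneg h2 hb)).1 h0
      exact h1.2
    have : star v ⬝ᵥ σ2.mulVec v = 0 := by
      rw [smul_eq_mul] at haz
      rcases mul_eq_zero.1 haz with h' | h'
      · norm_num at h'
      · exact h'
    exact (hσ2psd.dotProduct_mulVec_zero_iff v).1 this
  have hk1 := klein_matrix hσ1psd hτpsd hσ1tr hτtr hsupp1
  have hk2 := klein_matrix hσ2psd hτpsd hσ2tr hτtr hsupp2
  -- the decomposition identity
  have hcross : (σ1 * cfc flog τ).trace.re + (σ2 * cfc flog τ).trace.re
      = 2 * (τ * cfc flog τ).trace.re := by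
    have h1 : τ * cfc flog τ = (2⁻¹ : ℂ) • (σ1 * cfc flog τ) + (2⁻¹ : ℂ) • (σ2 * cfc flog τ) := by
      rw [hτdef, add_mul, smul_mul_assoc, smul_mul_assoc]
    rw [h1, Matrix.trace_add, Matrix.trace_smul, Matrix.trace_smul, Complex.add_re,
      smul_eq_mul, smul_eq_mul, ← h2inv, Complex.re_ofReal_mul, Complex.re_ofReal_mul]
    ring
  have hvn1 : (σ1 * cfc flog σ1).trace.re = -vnEnt σ1 := by
    rw [vnEnt, mlog_eq_cfc_flog]; ring
  have hvn2 : (σ2 * cfc flog σ2).trace.re = -vnEnt σ2 := by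
    rw [vnEnt, mlog_eq_cfc_flog]; ring
  have hvnτ : (τ * cfc flog τ).trace.re = -vnEnt τ := by
    rw [vnEnt, mlog_eq_cfc_flog]; ring
  have hD1eq : D1 = (σ1 * cfc flog σ1).trace.re - (σ1 * cfc flog τ).trace.re := by
    rw [hD1def, mul_sub, Matrix.trace_sub, Complex.sub_re]
  have hD2eq : D2 = (σ2 * cfc flog σ2).trace.re - (σ2 * cfc flog τ).trace.re := by
    rw [hD2def, mul_sub, Matrix.trace_sub, Complex.sub_re]
  have hDsum : D1 + D2 = 2 * vnEnt τ - vnEnt σ1 - vnEnt σ2 := by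
    rw [hD1eq, hD2eq, hvn1, hvn2]
    have : (σ1 * cfc flog τ).trace.re + (σ2 * cfc flog τ).trace.re = 2 * -vnEnt τ := by
      rw [hcross, hvnτ]
    linarith [this]
  have hD1z : D1 = 0 := by linarith [hk1.1, hk2.1, hDsum, key]
  have hD2z : D2 = 0 := by linarith [hk1.1, hk2.1, hDsum, key]
  have he1 : σ1 = τ := hk1.2 hD1z
  have he2 : σ2 = τ := hk2.2 hD2z
  rw [he1, he2]

end
end
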